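/- Let p be prime, r ≥ 1, and a_1, ..., a_n nonnegative integers summing to a. Then the multinomial coefficient (p^r a)! / ((p^r a_1)! ··· (p^r a_n)!) is congruent to (p^{r-1} a)! / ((p^{r-1} a_1)! ··· (p^{r-1} a_n)!) modulo p^{2r}. -/

import Mathlib

/-!
Let `F(N)` be the product of the integers in `(0, N]` prime to `p`, so that
`(p M)! = p^M M! F(p M)`. Splitting off the multiples of `p` in the three factorials of
`binom(p^r (b + c), p^r b)` gives
`binom(p^r (b + c), p^r b) F(p^r b) F(p^r c) = binom(p^(r-1) (b + c), p^(r-1) b) F(p^r (b + c))`,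
and it remains to compare the `F`'s modulo `p^(2r)`. A block `∏ (p^r k + u)`, `u` running over the
units of `(0, p^r]`, agrees with `F(p^r)` up to the first-order term `p^r k ∑_u ∏_{v ≠ u} v`, and
the sum vanishes modulo `p^r` because `u ↦ p^r - u` negates its terms. Hence
`F(p^r x) ≡ F(p^r)^x` and the unit factors cancel. When `p^r = 2` the blocks are `2k + 1`,
`F(2(b + c)) ≡ F(2b) F(2c) (1 + 2bc) mod 4`, and the error `2bc binom(b + c, b)` is divisible
by `4`. The multinomial coefficient is a product of such binomial coefficients.
-/

open Finset Nat

theorem Finset.prod_Ioc_id_eq_factorial (n : ℕ) : ∏ u ∈ Ioc 0 n, u = n ! := by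
  rw [← Finset.Ico_add_one_add_one_eq_Ioc, zero_add, prod_Ico_id_eq_factorial]

theorem Finset.prod_add_of_sq_eq_zero {ι R : Type*} [DecidableEq ι] [CommSemiring R] {y : R}
    (hy : y ^ 2 = 0) (s : Finset ι) (f : ι → R) :
    ∏ i ∈ s, (y + f i) = ∏ i ∈ s, f i + y * ∑ i ∈ s, ∏ j ∈ s.erase i, f j := by
  have h := (∏ i ∈ s, (Polynomial.X + Polynomial.C (f i))).eval_add_of_sq_eq_zero 0 y hy
  simpa [Polynomial.eval_prod, Polynomial.derivative_prod_finset, Polynomial.eval_finsetSum,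
    mul_comm] using h

def coprimeFactorial (p N : ℕ) : ℕ := ∏ u ∈ Ioc 0 N with ¬ p ∣ u, u

theorem Ioc_filter_dvd_mul_eq_map {p : ℕ} (hp : 0 < p) (M : ℕ) :
    {u ∈ Ioc 0 (p * M) | p ∣ u} = (Ioc 0 M).map ⟨(p * ·), mul_right_injective₀ hp.ne'⟩ := by
  ext u
  simp only [mem_filter, mem_Ioc, mem_map, Function.Embedding.coeFn_mk]
  constructor
  · rintro ⟨⟨hu, huM⟩, i, rfl⟩
    exact ⟨i, ⟨Nat.pos_of_mul_pos_left hu, Nat.le_of_mul_le_mul_left huM hp⟩, rfl⟩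
  · rintro ⟨i, ⟨hi, hiM⟩, rfl⟩
    exact ⟨⟨Nat.mul_pos hp hi, Nat.mul_le_mul_left p hiM⟩, dvd_mul_right p i⟩

theorem factorial_mul_eq_pow_mul_coprimeFactorial {p : ℕ} (hp : 0 < p) (M : ℕ) :
    (p * M)! = p ^ M * M ! * coprimeFactorial p (p * M) := by
  rw [← prod_Ioc_id_eq_factorial, ← prod_filter_mul_prod_filter_not _ (p ∣ ·),
    Ioc_filter_dvd_mul_eq_map hp, prod_map]
  simp only [Function.Embedding.coeFn_mk]
  rw [prod_mul_distrib, prod_const, card_Ioc, Nat.sub_zero, prod_Ioc_id_eq_factorial]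
  rfl

theorem coprimeFactorial_add {p N : ℕ} (h : p ∣ N) (K : ℕ) :
    coprimeFactorial p (N + K) = coprimeFactorial p N * ∏ u ∈ Ioc 0 K with ¬ p ∣ u, (N + u) := by
  have hshift : Ioc N (N + K) = (Ioc 0 K).map (addLeftEmbedding N) := by simp
  simp only [coprimeFactorial, prod_filter]
  rw [← prod_Ioc_consecutive _ (Nat.zero_le N) (Nat.le_add_right N K), hshift, prod_map]
  simp [Nat.dvd_add_right h]

theorem choose_mul_mul_coprimeFactorial {p : ℕ} (hp : 0 < p) (B C : ℕ) :
    (p * (B + C)).choose (p * B) * (coprimeFactorial p (p * B) * coprimeFactorial p (p * C)) =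
      (B + C).choose B * coprimeFactorial p (p * (B + C)) := by
  have hsplit (x y : ℕ) : (x + y).choose x * x ! * y ! = (x + y)! := by
    rw [Nat.choose_symm_add]; exact Nat.add_choose_mul_factorial_mul_factorial x y
  have h := hsplit (p * B) (p * C)
  simp only [← mul_add, factorial_mul_eq_pow_mul_coprimeFactorial hp] at h
  rw [← hsplit B C, pow_add] at h
  have hpos : 0 < p ^ B * p ^ C * B ! * C ! := by positivity
  apply Nat.eq_of_mul_eq_mul_left hpos
  linear_combination h

theorem coprime_coprimeFactorial {p : ℕ} (hp : p.Prime) (N : ℕ) :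
    Coprime (coprimeFactorial p N) p :=
  Nat.Coprime.prod_left fun _ hu => (hp.coprime_iff_not_dvd.2 (mem_filter.1 hu).2).symm

theorem prod_mul_add_modEq {Q : ℕ} {U : Finset ℕ} (hU : Q ∣ ∑ u ∈ U, ∏ v ∈ U.erase u, v)
    (k : ℕ) : ∏ u ∈ U, (Q * k + u) ≡ ∏ u ∈ U, u [MOD Q ^ 2] := by
  obtain ⟨e, he⟩ := hU
  have hQ : (Q : ZMod (Q ^ 2)) ^ 2 = 0 := by rw [← Nat.cast_pow, ZMod.natCast_self]
  rw [← ZMod.natCast_eq_natCast_iff]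
  push_cast
  rw [prod_add_of_sq_eq_zero (by rw [mul_pow, hQ, zero_mul]), add_eq_left]
  have hD := congrArg (Nat.cast : ℕ → ZMod (Q ^ 2)) he
  push_cast at hD
  rw [hD]
  linear_combination (k * e : ZMod (Q ^ 2)) * hQ

theorem sub_mem_Ioc_filter_not_dvd {p r u : ℕ} (hr : r ≠ 0)
    (hu : u ∈ {v ∈ Ioc 0 (p ^ r) | ¬ p ∣ v}) : p ^ r - u ∈ {v ∈ Ioc 0 (p ^ r) | ¬ p ∣ v} := by
  simp only [mem_filter, mem_Ioc] at hu ⊢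
  obtain ⟨⟨hu0, huQ⟩, hpu⟩ := hu
  have hpQ : p ∣ p ^ r := dvd_pow_self p hr
  have huQ' : u < p ^ r := lt_of_le_of_ne huQ fun h => hpu (h ▸ hpQ)
  refine ⟨⟨by omega, by omega⟩, fun h => hpu ?_⟩
  simpa [Nat.sub_sub_self huQ] using Nat.dvd_sub hpQ h

theorem prime_pow_dvd_sum_prod_erase {p r : ℕ} (hp : p.Prime) (hr : r ≠ 0) (hQ : p ^ r ≠ 2) :
    p ^ r ∣ ∑ u ∈ Ioc 0 (p ^ r) with ¬ p ∣ u, ∏ v ∈ {v ∈ Ioc 0 (p ^ r) | ¬ p ∣ v}.erase u, v := by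
  set U := {v ∈ Ioc 0 (p ^ r) | ¬ p ∣ v}
  have hunit {u} (hu : u ∈ U) : IsUnit (u : ZMod (p ^ r)) :=
    (ZMod.isUnit_iff_coprime _ _).2 <|
      ((hp.coprime_iff_not_dvd.2 (mem_filter.1 hu).2).pow_left r).symm
  rw [← ZMod.natCast_eq_zero_iff]
  push_cast
  -- `u ↦ p ^ r - u` negates the terms modulo `p ^ r`; a fixed point `2 u = p ^ r` with `u` prime
  -- to `p` forces `u = 1`.
  refine sum_involution (fun u _ => p ^ r - u) (fun u hu => ?_) (fun u hu _ hfix => ?_)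
    (fun u hu => sub_mem_Ioc_filter_not_dvd hr hu) (fun u hu => ?_)
  · have hneg : ((p ^ r - u : ℕ) : ZMod (p ^ r)) = -u := by
      rw [Nat.cast_sub (mem_Ioc.1 (mem_filter.1 hu).1).2, ZMod.natCast_self, zero_sub]
    apply (hunit hu).mul_left_cancel
    rw [mul_zero, mul_add, mul_prod_erase _ _ hu, ← neg_neg (u : ZMod (p ^ r)), ← hneg, neg_mul,
      mul_prod_erase _ _ (sub_mem_Ioc_filter_not_dvd hr hu), add_neg_cancel]
  · have htwo : 2 * u = p ^ r := by omega
    have hcop : Coprime u (2 * u) :=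
      htwo ▸ ((hp.coprime_iff_not_dvd.2 (mem_filter.1 hu).2).pow_left r).symm
    exact hQ (by rw [← htwo, hcop.eq_one_of_dvd (dvd_mul_left u 2)])
  · exact Nat.sub_sub_self (mem_Ioc.1 (mem_filter.1 hu).1).2

theorem coprimeFactorial_prime_pow_mul_modEq {p r : ℕ} (hp : p.Prime) (hr : r ≠ 0)
    (hQ : p ^ r ≠ 2) (x : ℕ) :
    coprimeFactorial p (p ^ r * x) ≡ coprimeFactorial p (p ^ r) ^ x [MOD (p ^ r) ^ 2] := by
  induction x with
  | zero =>
    simp only [coprimeFactorial, mul_zero, Ioc_self, filter_empty, prod_empty, pow_zero,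
      Nat.ModEq.refl]
  | succ x ih =>
    rw [mul_add_one, coprimeFactorial_add (dvd_mul_of_dvd_left (dvd_pow_self p hr) x), pow_succ]
    exact ih.mul (prod_mul_add_modEq (prime_pow_dvd_sum_prod_erase hp hr hQ) x)

theorem choose_prime_pow_mul_modEq_of_ne_two {p r : ℕ} (hp : p.Prime) (hr : r ≠ 0)
    (hQ : p ^ r ≠ 2) (b c : ℕ) :
    (p ^ r * (b + c)).choose (p ^ r * b) ≡
      (p ^ (r - 1) * (b + c)).choose (p ^ (r - 1) * b) [MOD p ^ (2 * r)] := by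
  set m := p ^ (r - 1)
  have hpm : p * m = p ^ r := mul_pow_sub_one hr p
  have hF := coprimeFactorial_prime_pow_mul_modEq hp hr hQ
  have hW : Coprime (coprimeFactorial p (p ^ r) ^ (b + c)) ((p ^ r) ^ 2) :=
    ((coprime_coprimeFactorial hp _).pow_right r).pow _ _
  have key := choose_mul_mul_coprimeFactorial hp.pos (m * b) (m * c)
  rw [← mul_add, ← mul_assoc p m b, ← mul_assoc p m c, ← mul_assoc p m (b + c), hpm] at key
  rw [mul_comm, pow_mul]
  refine Nat.ModEq.cancel_right_of_coprime hW.symm ?_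
  calc (p ^ r * (b + c)).choose (p ^ r * b) * coprimeFactorial p (p ^ r) ^ (b + c)
      ≡ (p ^ r * (b + c)).choose (p ^ r * b) *
          (coprimeFactorial p (p ^ r * b) * coprimeFactorial p (p ^ r * c)) [MOD (p ^ r) ^ 2] := by
        rw [pow_add]; exact ((hF b).mul (hF c)).symm.mul_left _
    _ = (m * (b + c)).choose (m * b) * coprimeFactorial p (p ^ r * (b + c)) := key
    _ ≡ (m * (b + c)).choose (m * b) * coprimeFactorial p (p ^ r) ^ (b + c) [MOD (p ^ r) ^ 2] :=
        (hF _).mul_left _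

theorem coprimeFactorial_two_mul_succ (x : ℕ) :
    coprimeFactorial 2 (2 * (x + 1)) = coprimeFactorial 2 (2 * x) * (2 * x + 1) := by
  rw [mul_add_one, coprimeFactorial_add (dvd_mul_right 2 x),
    show {u ∈ Ioc 0 2 | ¬ 2 ∣ u} = {1} by decide, prod_singleton]

theorem coprimeFactorial_two_mul_add_modEq (b c : ℕ) :
    coprimeFactorial 2 (2 * (b + c)) ≡
      coprimeFactorial 2 (2 * b) * coprimeFactorial 2 (2 * c) * (1 + 2 * b * c) [MOD 4] := by
  induction c with
  | zero =>
    simp only [coprimeFactorial, add_zero, mul_zero, Ioc_self, filter_empty, prod_empty, mul_one,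
      Nat.ModEq.refl]
  | succ c ih =>
    rw [← add_assoc, coprimeFactorial_two_mul_succ, coprimeFactorial_two_mul_succ,
      ← ZMod.natCast_eq_natCast_iff]
    rw [← ZMod.natCast_eq_natCast_iff] at ih
    push_cast at ih ⊢
    rw [ih]
    have h4 : (4 : ZMod 4) = 0 := rfl
    linear_combination (coprimeFactorial 2 (2 * b) * coprimeFactorial 2 (2 * c) * b * c * (b - 1) :
      ZMod 4) * h4

theorem two_dvd_mul_mul_choose (b c : ℕ) : 2 ∣ b * c * (b + c).choose b := by
  rcases Nat.even_or_odd b with hb | hb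
  · exact (hb.two_dvd.mul_right c).mul_right _
  rcases Nat.even_or_odd c with hc | hc
  · exact (hc.two_dvd.mul_left b).mul_right _
  obtain ⟨b, rfl⟩ : ∃ b', b = b' + 1 := ⟨b - 1, by have := hb.pos; omega⟩
  have hsucc := Nat.add_one_mul_choose_eq (b + c) b
  rw [show b + c + 1 = b + 1 + c by ring] at hsucc
  rw [show (b + 1) * c * (b + 1 + c).choose (b + 1) = c * ((b + 1 + c).choose (b + 1) * (b + 1))
    by ring, ← hsucc]
  exact ((hb.add_odd hc).two_dvd.mul_right _).mul_left c

theorem choose_two_mul_modEq (b c : ℕ) :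
    (2 * (b + c)).choose (2 * b) ≡ (b + c).choose b [MOD 4] := by
  set G := coprimeFactorial 2 (2 * b) * coprimeFactorial 2 (2 * c)
  have hG : Coprime G (2 ^ 2) :=
    ((coprime_coprimeFactorial prime_two _).mul_left
      (coprime_coprimeFactorial prime_two _)).pow_right 2
  obtain ⟨e, he⟩ := two_dvd_mul_mul_choose b c
  refine Nat.ModEq.cancel_right_of_coprime hG.symm ?_
  calc (2 * (b + c)).choose (2 * b) * G = (b + c).choose b * coprimeFactorial 2 (2 * (b + c)) :=
        choose_mul_mul_coprimeFactorial two_pos b c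
    _ ≡ (b + c).choose b * (G * (1 + 2 * b * c)) [MOD 4] :=
        (coprimeFactorial_two_mul_add_modEq b c).mul_left _
    _ = (b + c).choose b * G + 4 * (e * G) := by linear_combination (2 * G) * he
    _ ≡ (b + c).choose b * G + 0 [MOD 4] :=
        Nat.ModEq.add_left _ (Nat.modEq_zero_iff_dvd.2 ⟨_, rfl⟩)
    _ = (b + c).choose b * G := add_zero _

theorem choose_prime_pow_mul_modEq {p r : ℕ} (hp : p.Prime) (hr : r ≠ 0) (b c : ℕ) :
    (p ^ r * (b + c)).choose (p ^ r * b) ≡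
      (p ^ (r - 1) * (b + c)).choose (p ^ (r - 1) * b) [MOD p ^ (2 * r)] := by
  by_cases hQ : p ^ r = 2
  · obtain ⟨rfl, rfl⟩ := (Nat.prime_two.pow_eq_iff).1 hQ
    simpa using choose_two_mul_modEq b c
  · exact choose_prime_pow_mul_modEq_of_ne_two hp hr hQ b c

theorem multinomial_prime_pow_mul_modEq {ι : Type*} {p r : ℕ} (hp : p.Prime) (hr : r ≠ 0)
    (s : Finset ι) (f : ι → ℕ) :
    Nat.multinomial s (fun i => p ^ r * f i) ≡
      Nat.multinomial s (fun i => p ^ (r - 1) * f i) [MOD p ^ (2 * r)] := by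
  classical
  induction s using Finset.induction_on with
  | empty => simp only [multinomial_empty, Nat.ModEq.refl]
  | insert a s ha ih =>
    simp only [Nat.multinomial_insert ha, ← mul_sum, ← mul_add]
    exact (choose_prime_pow_mul_modEq hp hr _ _).mul ih

theorem stmt_16_general (p : ℕ) (hp : p.Prime) (r : ℕ) (hr : 1 ≤ r)
    (n : ℕ) (a : Fin n → ℕ) :
    Nat.multinomial Finset.univ (fun i => p ^ r * a i)
      ≡ Nat.multinomial Finset.univ (fun i => p ^ (r - 1) * a i) [MOD p ^ (2 * r)] :=
  multinomial_prime_pow_mul_modEq hp (Nat.one_le_iff_ne_zero.1 hr) _ a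

/-- For a prime `p`, `r ≥ 1` and nonnegative integers `a_1, ..., a_n` summing to `a`,
the multinomial coefficient of `(p^r a_1, ..., p^r a_n)` is congruent to that of
`(p^(r-1) a_1, ..., p^(r-1) a_n)` modulo `p^(2r)`. -/
theorem stmt_16 (p : ℕ) (hp : p.Prime) (r : ℕ) (hr : 1 ≤ r)
    (n : ℕ) (a : Fin n → ℕ) (A : ℕ) (hA : ∑ i, a i = A) :
    Nat.multinomial Finset.univ (fun i => p ^ r * a i)
      ≡ Nat.multinomial Finset.univ (fun i => p ^ (r - 1) * a i) [MOD p ^ (2 * r)] :=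
  stmt_16_general p hp r hr n a
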